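/- Let C1^{11}, C1^{12}, C1^{21}, C1^{22}, C2^{11}, C2^{12}, C2^{21}, C2^{22} be real numbers, and let T and P be real numbers such that for each n ∈ {1, 2}: C_n^{11} − T·C_n^{21} − P·C_n^{12} + T·P·C_n^{22} = 0. Then T satisfies the quadratic equation a·T² + b·T + c = 0, where a = C1^{21}·C2^{22} − C1^{22}·C2^{21}, b = C1^{22}·C2^{11} + C1^{12}·C2^{21} − C1^{21}·C2^{12} − C1^{11}·C2^{22}, and c = C1^{11}·C2^{12} − C1^{12}·C2^{11}. -/
import Mathlib


/-- Elimination of `P = tan φ` from the two lag conditions of the decorrelation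
method yields a quadratic equation in `T = tan θ`. -/
theorem decorrelation_quadratic
    (C1_11 C1_12 C1_21 C1_22 C2_11 C2_12 C2_21 C2_22 T P : ℝ)
    (h1 : C1_11 - T * C1_21 - P * C1_12 + T * P * C1_22 = 0)
    (h2 : C2_11 - T * C2_21 - P * C2_12 + T * P * C2_22 = 0) :
    (C1_21 * C2_22 - C1_22 * C2_21) * T ^ 2
      + (C1_22 * C2_11 + C1_12 * C2_21 - C1_21 * C2_12 - C1_11 * C2_22) * T
      + (C1_11 * C2_12 - C1_12 * C2_11) = 0 := by
  linear_combination (C2_12 - T * C2_22) * h1 - (C1_12 - T * C1_22) * h2
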